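/- Let Γ = Γ₁ × Γ₂ ⊆ ℝ² with Γ₁ = Γ₂ = (−∞,0], F : ℝ → ℝ², F(x) = (−x, x + x²), and x̄ = 0. Then pseudo-normality fails at x̄: for λ̄ = (1,1) one has λ̄ ∈ N_Γ(F(x̄)), ∇F(x̄)ᵀλ̄ = 0, and for any sequence x_k ↓ 0, ⟨λ̄, F(x_k) − F(x̄)⟩ = x_k² > 0. -/

import Mathlib

open Set Filter Topology Metric

noncomputable section

def convNormal {E : Type*} [NormedAddCommGroup E] [InnerProductSpace ℝ E]
    (P : Set E) (y : E) : Set E :=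
  {v | ∀ p ∈ P, (inner ℝ v (p - y) : ℝ) ≤ 0}

def v2 (a b : ℝ) : EuclideanSpace ℝ (Fin 2) :=
  (WithLp.equiv 2 (Fin 2 → ℝ)).symm ![a, b]

def Gamma15 : Set (EuclideanSpace ℝ (Fin 2)) :=
  {y | y 0 ≤ 0 ∧ y 1 ≤ 0}

def F15 (x : ℝ) : EuclideanSpace ℝ (Fin 2) := v2 (-x) (x + x ^ 2)

@[simp] lemma v2_apply_zero (a b : ℝ) : v2 a b 0 = a := rfl

@[simp] lemma v2_apply_one (a b : ℝ) : v2 a b 1 = b := rfl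

lemma inner_eq_fin_two (x y : EuclideanSpace ℝ (Fin 2)) :
    (inner ℝ x y : ℝ) = x 0 * y 0 + x 1 * y 1 := by
  simp [PiLp.inner_apply, Fin.sum_univ_two, mul_comm]

lemma inner_v2_v2 (a b c d : ℝ) : (inner ℝ (v2 a b) (v2 c d) : ℝ) = a * c + b * d := by
  rw [inner_eq_fin_two]; rfl

lemma v2_ne_zero_of_left_ne_zero {a : ℝ} (ha : a ≠ 0) (b : ℝ) : v2 a b ≠ 0 := fun h =>
  ha (by simpa using congrArg (· 0) h)

lemma v2_zero_zero : v2 0 0 = 0 := by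
  ext i; fin_cases i <;> rfl

lemma F15_zero : F15 0 = 0 := by
  simp [F15, v2_zero_zero]

lemma v2_mem_convNormal_Gamma15_zero {a b : ℝ} (ha : 0 ≤ a) (hb : 0 ≤ b) :
    v2 a b ∈ convNormal Gamma15 0 := by
  rintro p ⟨hp₀, hp₁⟩
  rw [sub_zero, inner_eq_fin_two, v2_apply_zero, v2_apply_one]
  linarith [mul_nonpos_of_nonneg_of_nonpos ha hp₀, mul_nonpos_of_nonneg_of_nonpos hb hp₁]

lemma inner_v2_one_one_F15_sub_F15_zero (x : ℝ) :
    (inner ℝ (v2 1 1) (F15 x - F15 0) : ℝ) = x ^ 2 := by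
  rw [F15_zero, sub_zero, F15, inner_v2_v2]
  ring

/-- Pseudo-normality fails at `x̄ = 0`: `λ̄ = (1,1)` is a nonzero multiplier in the normal
cone, in the kernel of `∇F(0)ᵀ` (where `∇F(0) = (−1,1)ᵀ`), and every `x > 0` gives
`⟨λ̄, F(x) − F(0)⟩ = x² > 0`; in particular a sequence `x_k → 0` violating
pseudo-normality exists. -/
theorem stmt15 :
    v2 1 1 ≠ 0 ∧
    v2 1 1 ∈ convNormal Gamma15 (F15 0) ∧
    (inner ℝ (v2 1 1) (v2 (-1) 1) : ℝ) = 0 ∧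
    (∀ x : ℝ, 0 < x →
      (inner ℝ (v2 1 1) (F15 x - F15 0) : ℝ) = x ^ 2 ∧
      0 < (inner ℝ (v2 1 1) (F15 x - F15 0) : ℝ)) ∧
    ∃ xk : ℕ → ℝ, Tendsto xk atTop (𝓝 0) ∧
      ∀ k, 0 < (inner ℝ (v2 1 1) (F15 (xk k) - F15 0) : ℝ) := by
  have hquad := inner_v2_one_one_F15_sub_F15_zero
  refine ⟨v2_ne_zero_of_left_ne_zero one_ne_zero 1, ?_, by rw [inner_v2_v2]; norm_num,
    fun x hx => ⟨hquad x, by rw [hquad]; positivity⟩,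
    fun k => 1 / (k + 1), tendsto_one_div_add_atTop_nhds_zero_nat, fun k => by rw [hquad]; positivity⟩
  rw [F15_zero]
  exact v2_mem_convNormal_Gamma15_zero zero_le_one zero_le_one
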